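/- arXiv:1004.0533 — 2 statements merged into one kernel-verified Lean document; each statement's English description precedes it below -/
import Mathlib

section
/- (Decreasing transformation equivariance) If φ : ℝ → ℝ is non-increasing and right continuous, then for any random variable X and p ∈ (0,1), lq_{φ(X)}(p) = φ(rq_X(1−p)); if φ is non-increasing and left continuous, then rq_{φ(X)}(p) = φ(lq_X(1−p)). -/
/-!
Everything depends only on the law `μ` of `X`, whose distribution function `F` is right
continuous with left limit `μ (-∞, x)` at `x`. Put `q = rq_X(1 - p)`. If `y ≥ φ q` then
`φ(X) ≤ y` on `{X ≥ q}`, an event of probability at least `p`; if `y < φ q`, right continuity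
of `φ` confines `{φ(X) ≤ y}` to `{X > u}` for some `u > q`, of probability `1 - F u < p`.
So `{y | p ≤ G y} = [φ q, ∞)`. In the left continuous case the same two comparisons, now at
`l = lq_X(1 - p)` where `F l ≥ 1 - p`, squeeze `{y | p < G y}` between `(φ l, ∞)` and
`[φ l, ∞)`.
-/

open MeasureTheory ProbabilityTheory Set Filter Topology

lemma IsUpperSet.mem_of_csInf_lt {α : Type*} [ConditionallyCompleteLinearOrder α] {s : Set α}
    (hs : IsUpperSet s) (hne : s.Nonempty) {x : α} (hx : sInf s < x) : x ∈ s :=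
  let ⟨_, hy, hyx⟩ := exists_lt_of_csInf_lt hne hx
  hs hyx.le hy

lemma csInf_eq_of_Ioi_subset_of_subset_Ici {α : Type*} [ConditionallyCompleteLinearOrder α]
    [DenselyOrdered α] [NoMaxOrder α] {s : Set α} {a : α} (h₁ : Ioi a ⊆ s)
    (h₂ : s ⊆ Ici a) : sInf s = a := by
  have hbdd : BddBelow s := ⟨a, h₂⟩
  refine le_antisymm (le_of_forall_gt_imp_ge_of_dense fun b hb => csInf_le hbdd (h₁ hb)) ?_
  obtain ⟨b, hb⟩ := exists_gt a
  exact le_csInf ⟨b, h₁ hb⟩ h₂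

section Cdf

variable {μ : Measure ℝ}

lemma le_cdf_of_forall_gt {q c : ℝ} (h : ∀ x > q, c ≤ cdf μ x) : c ≤ cdf μ q :=
  ge_of_tendsto (((cdf μ).right_continuous q).mono Ioi_subset_Ici_self)
    (eventually_nhdsWithin_of_forall h)

variable [IsProbabilityMeasure μ]

lemma measureReal_Iio_le_of_forall_lt {q c : ℝ} (h : ∀ x < q, cdf μ x ≤ c) :
    μ.real (Iio q) ≤ c := by
  have hlim : Function.leftLim (cdf μ) q ≤ c :=
    le_of_tendsto ((monotone_cdf μ).tendsto_leftLim q) (eventually_nhdsWithin_of_forall h)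
  have hc : 0 ≤ c := (cdf_nonneg μ (q - 1)).trans (h _ (by linarith))
  rw [measureReal_def, ← measure_cdf μ, (cdf μ).measure_Iio (tendsto_cdf_atBot μ), sub_zero]
  exact ENNReal.toReal_le_of_le_ofReal hc (ENNReal.ofReal_le_ofReal hlim)

lemma measureReal_Ioi_eq_one_sub_cdf (u : ℝ) : μ.real (Ioi u) = 1 - cdf μ u := by
  rw [← compl_Iic, probReal_compl_eq_one_sub measurableSet_Iic, cdf_eq_real]

lemma measureReal_le_one_sub_cdf {s : Set ℝ} {u : ℝ} (h : s ⊆ Ioi u) :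
    μ.real s ≤ 1 - cdf μ u :=
  measureReal_Ioi_eq_one_sub_cdf (μ := μ) u ▸ measureReal_mono h

lemma one_sub_cdf_le_measureReal {s : Set ℝ} {u : ℝ} (h : Ioi u ⊆ s) :
    1 - cdf μ u ≤ μ.real s :=
  measureReal_Ioi_eq_one_sub_cdf (μ := μ) u ▸ measureReal_mono h

variable {φ : ℝ → ℝ} {p q : ℝ}

lemma le_measureReal_preimage_Iic_iff_of_antitone (hφ : Antitone φ)
    (hφq : ContinuousWithinAt φ (Ioi q) q) (hlt : ∀ x < q, cdf μ x ≤ 1 - p)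
    (hgt : ∀ x > q, 1 - p < cdf μ x) (y : ℝ) :
    p ≤ μ.real (φ ⁻¹' Iic y) ↔ φ q ≤ y := by
  constructor
  · intro hy
    by_contra! hyq
    obtain ⟨u, hqu, hu⟩ := mem_nhdsGT_iff_exists_Ioc_subset.mp
      (hφq.eventually (eventually_gt_nhds hyq))
    have hsub : φ ⁻¹' Iic y ⊆ Ioi u := fun x (hx : φ x ≤ y) => lt_of_not_ge fun hxu => by
      rcases le_or_gt x q with hxq | hxq
      · exact (hx.trans_lt hyq).not_ge (hφ hxq)
      · exact hx.not_gt (hu ⟨hxq, hxu⟩)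
    linarith [measureReal_le_one_sub_cdf (μ := μ) hsub, hgt u hqu]
  · intro hy
    have hsub : Ici q ⊆ φ ⁻¹' Iic y := fun x (hx : q ≤ x) => (hφ hx).trans hy
    have hIci := measureReal_mono (μ := μ) hsub
    rw [← compl_Iio, probReal_compl_eq_one_sub measurableSet_Iio] at hIci
    linarith [measureReal_Iio_le_of_forall_lt hlt]

lemma Ioi_subset_setOf_lt_measureReal_preimage_Iic (hφ : Antitone φ)
    (hφq : ContinuousWithinAt φ (Iio q) q) (hlt : ∀ x < q, cdf μ x < 1 - p) :
    Ioi (φ q) ⊆ {y | p < μ.real (φ ⁻¹' Iic y)} := by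
  intro y (hy : φ q < y)
  obtain ⟨u, huq, hu⟩ := mem_nhdsLT_iff_exists_Ico_subset.mp
    (hφq.eventually (eventually_lt_nhds hy))
  have hsub : Ioi u ⊆ φ ⁻¹' Iic y := fun x (hxu : u < x) => by
    rcases lt_or_ge x q with hxq | hxq
    · exact (show φ x < y from hu ⟨hxu.le, hxq⟩).le
    · exact (hφ hxq).trans hy.le
  show p < μ.real (φ ⁻¹' Iic y)
  linarith [one_sub_cdf_le_measureReal (μ := μ) hsub, hlt u huq]

lemma setOf_lt_measureReal_preimage_Iic_subset_Ici (hφ : Antitone φ) (hq : 1 - p ≤ cdf μ q) :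
    {y | p < μ.real (φ ⁻¹' Iic y)} ⊆ Ici (φ q) := by
  refine fun y (hy : p < μ.real (φ ⁻¹' Iic y)) => mem_Ici.mpr <| le_of_not_gt fun hyq => ?_
  have hsub : φ ⁻¹' Iic y ⊆ Ioi q := fun x (hx : φ x ≤ y) =>
    lt_of_not_ge fun hxq => (hx.trans_lt hyq).not_ge (hφ hxq)
  linarith [measureReal_le_one_sub_cdf (μ := μ) hsub]

end Cdf

theorem decreasing_transformation_equivariance_general {Ω : Type*} [MeasurableSpace Ω]
    (P : Measure Ω) [IsProbabilityMeasure P] (X : Ω → ℝ) (hX : Measurable X)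
    (φ : ℝ → ℝ) (hanti : Antitone φ)
    (F G : ℝ → ℝ)
    (hF : ∀ x, F x = (P {ω | X ω ≤ x}).toReal)
    (hG : ∀ x, G x = (P {ω | φ (X ω) ≤ x}).toReal)
    (p : ℝ)
    (hne₁ : {x : ℝ | (1 - p) ≤ F x}.Nonempty) (hbd₁ : BddBelow {x : ℝ | (1 - p) ≤ F x})
    (hne₂ : {x : ℝ | (1 - p) < F x}.Nonempty) (hbd₂ : BddBelow {x : ℝ | (1 - p) < F x}) :
    ((∀ x : ℝ, ContinuousWithinAt φ (Set.Ioi x) x) →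
        sInf {x : ℝ | p ≤ G x} = φ (sInf {x : ℝ | (1 - p) < F x})) ∧
      ((∀ x : ℝ, ContinuousWithinAt φ (Set.Iio x) x) →
        sInf {x : ℝ | p < G x} = φ (sInf {x : ℝ | (1 - p) ≤ F x})) := by
  set μ := P.map X
  have : IsProbabilityMeasure μ := Measure.isProbabilityMeasure_map hX.aemeasurable
  obtain rfl : F = cdf μ := funext fun x => by
    rw [hF, cdf_eq_real, map_measureReal_apply hX measurableSet_Iic]; rfl
  obtain rfl : G = fun y => μ.real (φ ⁻¹' Iic y) := funext fun y => by
    rw [hG, map_measureReal_apply hX (hanti.measurable measurableSet_Iic)]; rfl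
  set q := sInf {x | 1 - p < cdf μ x}
  set l := sInf {x | 1 - p ≤ cdf μ x}
  have hupper_q : IsUpperSet {x | 1 - p < cdf μ x} := fun _ _ hab ha =>
    ha.trans_le (monotone_cdf μ hab)
  have hupper_l : IsUpperSet {x | 1 - p ≤ cdf μ x} := fun _ _ hab ha =>
    ha.trans (monotone_cdf μ hab)
  refine ⟨fun hright => ?_, fun hleft => ?_⟩
  · have hlt x (hx : x < q) : cdf μ x ≤ 1 - p :=
      not_lt.mp fun h => notMem_of_lt_csInf hx hbd₂ h
    have hgt x (hx : q < x) : 1 - p < cdf μ x := hupper_q.mem_of_csInf_lt hne₂ hx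
    refine (congrArg sInf (Set.ext fun y => ?_)).trans csInf_Ici
    exact le_measureReal_preimage_Iic_iff_of_antitone hanti (hright q) hlt hgt y
  · have hlt x (hx : x < l) : cdf μ x < 1 - p :=
      not_le.mp fun h => notMem_of_lt_csInf hx hbd₁ h
    have hl : 1 - p ≤ cdf μ l := le_cdf_of_forall_gt fun _ => hupper_l.mem_of_csInf_lt hne₁
    exact csInf_eq_of_Ioi_subset_of_subset_Ici
      (Ioi_subset_setOf_lt_measureReal_preimage_Iic hanti (hleft l) hlt)
      (setOf_lt_measureReal_preimage_Iic_subset_Ici hanti hl)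

/-- Decreasing transformation equivariance:
for non-increasing right continuous φ, lq_{φ(X)}(p) = φ(rq_X(1-p));
for non-increasing left continuous φ, rq_{φ(X)}(p) = φ(lq_X(1-p)). -/
theorem decreasing_transformation_equivariance {Ω : Type*} [MeasurableSpace Ω]
    (P : Measure Ω) [IsProbabilityMeasure P] (X : Ω → ℝ) (hX : Measurable X)
    (φ : ℝ → ℝ) (hanti : Antitone φ)
    (F G : ℝ → ℝ)
    (hF : ∀ x, F x = (P {ω | X ω ≤ x}).toReal)
    (hG : ∀ x, G x = (P {ω | φ (X ω) ≤ x}).toReal)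
    (p : ℝ) (hp : p ∈ Set.Ioo (0 : ℝ) 1)
    (hne₁ : {x : ℝ | (1 - p) ≤ F x}.Nonempty) (hbd₁ : BddBelow {x : ℝ | (1 - p) ≤ F x})
    (hne₂ : {x : ℝ | (1 - p) < F x}.Nonempty) (hbd₂ : BddBelow {x : ℝ | (1 - p) < F x})
    (hne₃ : {x : ℝ | p ≤ G x}.Nonempty) (hbd₃ : BddBelow {x : ℝ | p ≤ G x})
    (hne₄ : {x : ℝ | p < G x}.Nonempty) (hbd₄ : BddBelow {x : ℝ | p < G x}) :
    ((∀ x : ℝ, ContinuousWithinAt φ (Set.Ioi x) x) →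
        sInf {x : ℝ | p ≤ G x} = φ (sInf {x : ℝ | (1 - p) < F x})) ∧
      ((∀ x : ℝ, ContinuousWithinAt φ (Set.Iio x) x) →
        sInf {x : ℝ | p < G x} = φ (sInf {x : ℝ | (1 - p) ≤ F x})) :=
  decreasing_transformation_equivariance_general P X hX φ hanti F G hF hG p hne₁ hbd₁ hne₂ hbd₂
end

section
/- For a random variable X and p ∈ (0,1), the closed interval [lq_X(p), rq_X(p)] equals the set {y : P(X < y) ≤ p and P(X ≤ y) ≥ p}. Consequently, for any non-decreasing (not necessarily continuous) φ : ℝ → ℝ with Y = φ(X), both φ(lq_X(p)) and φ(rq_X(p)) lie in [lq_Y(p), rq_Y(p)], so that P(min < Y < max) = 0 between the transformed quantile and the quantile of the transformed variable. -/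
/-! The distribution function `F` of `X` is a Stieltjes function. Right continuity gives
`p ≤ F y ↔ lq ≤ y`, and since `F°` is the left limit of `F`, `F° y ≤ p ↔ y ≤ rq`; so `[lq, rq]` is
the set of `y` with `F° y ≤ p ≤ F y`. A monotone `φ` maps this set for `X` into the one for
`φ ∘ X`, because `{X ≤ y} ⊆ {φ ∘ X ≤ φ y}` and `{φ ∘ X < φ y} ⊆ {X < y}`. For `c, d` in the set
the mass of `(c, d)` is `F° d - F c ≤ p - p`, and the set contains the min and max of any two
of its points. -/

open MeasureTheory Set

open Filter Function ProbabilityTheory Topology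

namespace StieltjesFunction

variable (f : StieltjesFunction ℝ) {p : ℝ}

lemma le_apply_sInf (hne : {x | p ≤ f x}.Nonempty) (hbd : BddBelow {x | p ≤ f x}) :
    p ≤ f (sInf {x | p ≤ f x}) := by
  set m := sInf {x | p ≤ f x}
  have hlim : Tendsto f (𝓝[>] m) (𝓝 (f m)) :=
    ((f.right_continuous m).mono Ioi_subset_Ici_self).tendsto
  refine ge_of_tendsto hlim (eventually_nhdsWithin_of_forall fun x (hx : m < x) => ?_)
  obtain ⟨s, hs, hsx⟩ := (csInf_lt_iff hbd hne).mp hx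
  exact hs.trans (f.mono hsx.le)

lemma le_apply_iff_sInf_le (hne : {x | p ≤ f x}.Nonempty) (hbd : BddBelow {x | p ≤ f x})
    (y : ℝ) : p ≤ f y ↔ sInf {x | p ≤ f x} ≤ y :=
  ⟨fun hy => csInf_le hbd hy, fun hy => (f.le_apply_sInf hne hbd).trans (f.mono hy)⟩

end StieltjesFunction

lemma Monotone.leftLim_le_iff_le_sInf {f : ℝ → ℝ} (hf : Monotone f) {p : ℝ}
    (hne : {x | p < f x}.Nonempty) (hbd : BddBelow {x | p < f x}) (y : ℝ) :
    leftLim f y ≤ p ↔ y ≤ sInf {x | p < f x} := by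
  have below_iff : leftLim f y ≤ p ↔ ∀ x < y, f x ≤ p := by
    refine ⟨fun h x hx => (hf.le_leftLim hx).trans h, fun h => ?_⟩
    rw [hf.leftLim_eq_sSup]
    exact csSup_le (nonempty_Iio.image f) (forall_mem_image.mpr h)
  rw [below_iff]
  refine ⟨fun h => le_csInf hne fun x hx => ?_, fun h x hx => ?_⟩
  · exact not_lt.mp fun hxy => (h x hxy).not_gt hx
  · exact not_lt.mp fun hpx => (h.trans (csInf_le hbd hpx)).not_gt hx

def quantileSet (f : ℝ → ℝ) (p : ℝ) : Set ℝ := {y | leftLim f y ≤ p ∧ p ≤ f y}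

lemma StieltjesFunction.Icc_sInf_eq_quantileSet (f : StieltjesFunction ℝ) {p : ℝ}
    (hne₁ : {x | p ≤ f x}.Nonempty) (hbd₁ : BddBelow {x | p ≤ f x})
    (hne₂ : {x | p < f x}.Nonempty) (hbd₂ : BddBelow {x | p < f x}) :
    Icc (sInf {x | p ≤ f x}) (sInf {x | p < f x}) = quantileSet f p := by
  ext y
  rw [mem_Icc, quantileSet, mem_ofPred_eq, f.le_apply_iff_sInf_le hne₁ hbd₁,
    f.mono.leftLim_le_iff_le_sInf hne₂ hbd₂, and_comm]

lemma StieltjesFunction.sInf_mem_quantileSet (f : StieltjesFunction ℝ) {p : ℝ}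
    (hne₁ : {x | p ≤ f x}.Nonempty) (hbd₁ : BddBelow {x | p ≤ f x})
    (hne₂ : {x | p < f x}.Nonempty) (hbd₂ : BddBelow {x | p < f x}) :
    sInf {x | p ≤ f x} ∈ quantileSet f p ∧ sInf {x | p < f x} ∈ quantileSet f p := by
  have hle : sInf {x | p ≤ f x} ≤ sInf {x | p < f x} :=
    csInf_le_csInf hbd₁ hne₂ fun x (hx : p < f x) => hx.le
  rw [← f.Icc_sInf_eq_quantileSet hne₁ hbd₁ hne₂ hbd₂]
  exact ⟨left_mem_Icc.mpr hle, right_mem_Icc.mpr hle⟩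

namespace ProbabilityTheory

variable (μ : Measure ℝ) [IsProbabilityMeasure μ]

lemma leftLim_cdf (y : ℝ) : leftLim (cdf μ) y = μ.real (Iio y) := by
  have hnonneg : 0 ≤ leftLim (cdf μ) y :=
    (cdf_nonneg μ (y - 1)).trans ((monotone_cdf μ).le_leftLim (sub_one_lt y))
  have h := (cdf μ).measure_Iio (tendsto_cdf_atBot μ) y
  rw [measure_cdf, sub_zero] at h
  rw [measureReal_def, h, ENNReal.toReal_ofReal hnonneg]

lemma measure_Ioo_eq_zero_of_mem_quantileSet {p c d : ℝ} (hc : c ∈ quantileSet (cdf μ) p)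
    (hd : d ∈ quantileSet (cdf μ) p) : μ (Ioo c d) = 0 := by
  rw [← measure_cdf μ, StieltjesFunction.measure_Ioo, ENNReal.ofReal_eq_zero, sub_nonpos]
  exact hd.1.trans hc.2

lemma mapsTo_quantileSet_map {φ : ℝ → ℝ} (hmono : Monotone φ) (hφ : Measurable φ) (p : ℝ) :
    MapsTo φ (quantileSet (cdf μ) p) (quantileSet (cdf (μ.map φ)) p) := by
  intro y ⟨hlt, hle⟩
  have := Measure.isProbabilityMeasure_map (μ := μ) hφ.aemeasurable
  simp only [quantileSet, mem_ofPred_eq, leftLim_cdf, cdf_eq_real] at hlt hle ⊢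
  rw [map_measureReal_apply hφ measurableSet_Iio, map_measureReal_apply hφ measurableSet_Iic]
  refine ⟨le_trans (measureReal_mono fun x (hx : φ x < φ y) => ?_) hlt,
    hle.trans (measureReal_mono fun x (hx : x ≤ y) => hmono hx)⟩
  exact hmono.reflect_lt hx

end ProbabilityTheory

section RandomVariable

variable {Ω : Type*} [MeasurableSpace Ω] (P : Measure Ω) [IsProbabilityMeasure P] {X : Ω → ℝ}

lemma cdf_map_eq_toReal (hX : Measurable X) (x : ℝ) :
    cdf (P.map X) x = (P {ω | X ω ≤ x}).toReal := by
  have := Measure.isProbabilityMeasure_map (μ := P) hX.aemeasurable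
  rw [cdf_eq_real, map_measureReal_apply hX measurableSet_Iic, measureReal_def]
  rfl

lemma leftLim_cdf_map_eq_toReal (hX : Measurable X) (y : ℝ) :
    leftLim (cdf (P.map X)) y = (P {ω | X ω < y}).toReal := by
  have := Measure.isProbabilityMeasure_map (μ := P) hX.aemeasurable
  rw [leftLim_cdf, map_measureReal_apply hX measurableSet_Iio, measureReal_def]
  rfl

end RandomVariable

theorem quantile_interval_and_equivariance_noncontinuous_general {Ω : Type*} [MeasurableSpace Ω]
    (P : Measure Ω) [IsProbabilityMeasure P] (X : Ω → ℝ) (hX : Measurable X)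
    (φ : ℝ → ℝ) (hmono : Monotone φ) (hφ : Measurable φ)
    (F G : ℝ → ℝ)
    (hF : ∀ x, F x = (P {ω | X ω ≤ x}).toReal)
    (hG : ∀ x, G x = (P {ω | φ (X ω) ≤ x}).toReal)
    (p : ℝ)
    (hne₁ : {x : ℝ | p ≤ F x}.Nonempty) (hbd₁ : BddBelow {x : ℝ | p ≤ F x})
    (hne₂ : {x : ℝ | p < F x}.Nonempty) (hbd₂ : BddBelow {x : ℝ | p < F x})
    (hne₃ : {x : ℝ | p ≤ G x}.Nonempty) (hbd₃ : BddBelow {x : ℝ | p ≤ G x})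
    (hne₄ : {x : ℝ | p < G x}.Nonempty) (hbd₄ : BddBelow {x : ℝ | p < G x}) :
    Set.Icc (sInf {x : ℝ | p ≤ F x}) (sInf {x : ℝ | p < F x}) =
        {y : ℝ | (P {ω | X ω < y}).toReal ≤ p ∧ p ≤ (P {ω | X ω ≤ y}).toReal} ∧
      φ (sInf {x : ℝ | p ≤ F x}) ∈ Set.Icc (sInf {x : ℝ | p ≤ G x}) (sInf {x : ℝ | p < G x}) ∧
      φ (sInf {x : ℝ | p < F x}) ∈ Set.Icc (sInf {x : ℝ | p ≤ G x}) (sInf {x : ℝ | p < G x}) ∧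
      P {ω | min (φ (sInf {x : ℝ | p ≤ F x})) (sInf {x : ℝ | p ≤ G x}) < φ (X ω) ∧
          φ (X ω) < max (φ (sInf {x : ℝ | p ≤ F x})) (sInf {x : ℝ | p ≤ G x})} = 0 ∧
      P {ω | min (φ (sInf {x : ℝ | p < F x})) (sInf {x : ℝ | p < G x}) < φ (X ω) ∧
          φ (X ω) < max (φ (sInf {x : ℝ | p < F x})) (sInf {x : ℝ | p < G x})} = 0 := by
  have hY : Measurable (φ ∘ X) := hφ.comp hX
  have := Measure.isProbabilityMeasure_map (μ := P) hX.aemeasurable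
  have := Measure.isProbabilityMeasure_map (μ := P.map X) hφ.aemeasurable
  obtain rfl : F = cdf (P.map X) := funext fun x => (hF x).trans (cdf_map_eq_toReal P hX x).symm
  obtain rfl : G = cdf ((P.map X).map φ) := by
    rw [Measure.map_map hφ hX]
    exact funext fun x => (hG x).trans (cdf_map_eq_toReal P hY x).symm
  obtain ⟨hlq, hrq⟩ := (cdf (P.map X)).sInf_mem_quantileSet hne₁ hbd₁ hne₂ hbd₂
  obtain ⟨hlqY, hrqY⟩ := (cdf ((P.map X).map φ)).sInf_mem_quantileSet hne₃ hbd₃ hne₄ hbd₄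
  have hφq := mapsTo_quantileSet_map (P.map X) hmono hφ p
  have null_between {c d : ℝ} (hc : c ∈ quantileSet (cdf ((P.map X).map φ)) p)
      (hd : d ∈ quantileSet (cdf ((P.map X).map φ)) p) :
      P {ω | min c d < φ (X ω) ∧ φ (X ω) < max c d} = 0 := by
    have h := measure_Ioo_eq_zero_of_mem_quantileSet _ (min_rec' _ hc hd) (max_rec' _ hc hd)
    rwa [Measure.map_map hφ hX, Measure.map_apply hY measurableSet_Ioo] at h
  rw [(cdf ((P.map X).map φ)).Icc_sInf_eq_quantileSet hne₃ hbd₃ hne₄ hbd₄,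
    (cdf (P.map X)).Icc_sInf_eq_quantileSet hne₁ hbd₁ hne₂ hbd₂]
  refine ⟨?_, hφq hlq, hφq hrq, null_between (hφq hlq) hlqY, null_between (hφq hrq) hrqY⟩
  ext y
  simp only [quantileSet, mem_ofPred_eq, leftLim_cdf_map_eq_toReal P hX, cdf_map_eq_toReal P hX]

/-- The interval [lq_X(p), rq_X(p)] equals {y : P(X < y) ≤ p ∧ P(X ≤ y) ≥ p}; hence for any
non-decreasing φ with Y = φ(X), φ(lq_X(p)) and φ(rq_X(p)) lie in [lq_Y(p), rq_Y(p)], and the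
probability mass strictly between each transformed quantile and the corresponding quantile of
the transformed variable is zero. -/
theorem quantile_interval_and_equivariance_noncontinuous {Ω : Type*} [MeasurableSpace Ω]
    (P : Measure Ω) [IsProbabilityMeasure P] (X : Ω → ℝ) (hX : Measurable X)
    (φ : ℝ → ℝ) (hmono : Monotone φ) (hφ : Measurable φ)
    (F G : ℝ → ℝ)
    (hF : ∀ x, F x = (P {ω | X ω ≤ x}).toReal)
    (hG : ∀ x, G x = (P {ω | φ (X ω) ≤ x}).toReal)
    (p : ℝ) (hp : p ∈ Set.Ioo (0 : ℝ) 1)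
    (hne₁ : {x : ℝ | p ≤ F x}.Nonempty) (hbd₁ : BddBelow {x : ℝ | p ≤ F x})
    (hne₂ : {x : ℝ | p < F x}.Nonempty) (hbd₂ : BddBelow {x : ℝ | p < F x})
    (hne₃ : {x : ℝ | p ≤ G x}.Nonempty) (hbd₃ : BddBelow {x : ℝ | p ≤ G x})
    (hne₄ : {x : ℝ | p < G x}.Nonempty) (hbd₄ : BddBelow {x : ℝ | p < G x}) :
    Set.Icc (sInf {x : ℝ | p ≤ F x}) (sInf {x : ℝ | p < F x}) =
        {y : ℝ | (P {ω | X ω < y}).toReal ≤ p ∧ p ≤ (P {ω | X ω ≤ y}).toReal} ∧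
      φ (sInf {x : ℝ | p ≤ F x}) ∈ Set.Icc (sInf {x : ℝ | p ≤ G x}) (sInf {x : ℝ | p < G x}) ∧
      φ (sInf {x : ℝ | p < F x}) ∈ Set.Icc (sInf {x : ℝ | p ≤ G x}) (sInf {x : ℝ | p < G x}) ∧
      P {ω | min (φ (sInf {x : ℝ | p ≤ F x})) (sInf {x : ℝ | p ≤ G x}) < φ (X ω) ∧
          φ (X ω) < max (φ (sInf {x : ℝ | p ≤ F x})) (sInf {x : ℝ | p ≤ G x})} = 0 ∧
      P {ω | min (φ (sInf {x : ℝ | p < F x})) (sInf {x : ℝ | p < G x}) < φ (X ω) ∧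
          φ (X ω) < max (φ (sInf {x : ℝ | p < F x})) (sInf {x : ℝ | p < G x})} = 0 :=
  quantile_interval_and_equivariance_noncontinuous_general P X hX φ hmono hφ F G hF hG p hne₁ hbd₁
    hne₂ hbd₂ hne₃ hbd₃ hne₄ hbd₄
end
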